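/- (Main theorem, two-sided) If s : [1,∞) → ℂ is locally integrable, slowly oscillating with respect to logarithmic summability, and the statistical limit st-lim_{t→∞} τ(t) = ℓ of its logarithmic mean τ(t) := (1/log t)·∫₁ᵗ s(x)/x dx exists, then the ordinary limit lim_{x→∞} s(x) = ℓ exists. -/

import Mathlib

/-!
Given `δ > 0`, slow oscillation yields `l > 1` with `‖s t - s x‖ ≤ δ` for large `x` and
`x < t ≤ x ^ l`. A set of density zero cannot contain a whole interval `(x ^ a, x ^ b)`, `a < b`,
for large `x`, so there are `t₁ ∈ (x ^ l⁻¹, x)` and `t₂ ∈ (x ^ μ, x ^ l)`, `1 < μ < l`, at which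
`τ` is close to `ℓ`. On `(t₁, t₂]` the function `s` stays within `2δ` of `s x`, while
`∫_{t₁}^{t₂} s(u)/u du = log t₂ · τ(t₂) - log t₁ · τ(t₁)`. Dividing by
`log t₂ - log t₁ ≥ (μ - 1) log x`, which dominates `log t₁ + log t₂ ≤ (l + 1) log x`, shows that
`s x` is close to `ℓ`.
-/

open Filter MeasureTheory Set intervalIntegral

/-- `s` is slowly oscillating with respect to logarithmic summability `(L,1)`. -/
def SlowlyOscillatingL1 (s : ℝ → ℂ) : Prop :=
  (⨅ l ∈ Set.Ioi (1 : ℝ),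
    Filter.limsup (fun x : ℝ =>
      sSup ((fun t : ℝ => ((‖s t - s x‖ : ℝ) : EReal)) '' Set.Ioc x (x ^ l)))
      Filter.atTop) = 0

/-- Statistical limit of a complex-valued function at `∞`. -/
def StatLimC (s : ℝ → ℂ) (ℓ : ℂ) : Prop :=
  ∀ ε : ℝ, 0 < ε →
    Tendsto (fun b : ℝ =>
        (volume {x : ℝ | x ∈ Ioo (1 : ℝ) b ∧ ε < ‖s x - ℓ‖}).toReal / (b - 1))
      atTop (nhds 0)

namespace SlowlyOscillatingL1

theorem exists_eventually_norm_sub_le {s : ℝ → ℂ} (hso : SlowlyOscillatingL1 s) {δ : ℝ}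
    (hδ : 0 < δ) :
    ∃ l : ℝ, 1 < l ∧ ∀ᶠ x in atTop, ∀ t ∈ Ioc x (x ^ l), ‖s t - s x‖ ≤ δ := by
  have h : (⨅ l ∈ Ioi (1 : ℝ), limsup (fun x : ℝ =>
      sSup ((fun t : ℝ => ((‖s t - s x‖ : ℝ) : EReal)) '' Ioc x (x ^ l))) atTop) < δ := by
    rw [hso]; exact_mod_cast hδ
  simp only [iInf_lt_iff] at h
  obtain ⟨l, hl, hlim⟩ := h
  refine ⟨l, hl, ?_⟩
  filter_upwards [eventually_lt_of_limsup_lt hlim] with x hx t ht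
  exact_mod_cast ((le_sSup (mem_image_of_mem _ ht)).trans_lt hx).le

end SlowlyOscillatingL1

namespace StatLimC

variable {τ : ℝ → ℂ} {ℓ : ℂ} {ε : ℝ}

theorem eventually_exists_mem_Ioo (hst : StatLimC τ ℓ) (hε : 0 < ε) :
    ∀ᶠ y in atTop, ∀ a, 1 ≤ a → 2 * a ≤ y → ∃ t ∈ Ioo a y, ‖τ t - ℓ‖ ≤ ε := by
  filter_upwards [(hst ε hε).eventually (eventually_lt_nhds one_half_pos),
    eventually_gt_atTop 1] with y hy hy₁ a ha hay
  by_contra! hbad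
  set E := {x : ℝ | x ∈ Ioo (1 : ℝ) y ∧ ε < ‖τ x - ℓ‖}
  have hsub : Ioo a y ⊆ E := fun t ht => ⟨⟨ha.trans_lt ht.1, ht.2⟩, hbad t ht⟩
  have hfin : volume E ≠ ⊤ :=
    ((measure_mono fun _ h => h.1 : volume E ≤ volume (Ioo 1 y)).trans_lt
      measure_Ioo_lt_top).ne
  have hvol : y - a ≤ (volume E).toReal := by
    simpa [Real.volume_Ioo, ENNReal.toReal_ofReal (by linarith : 0 ≤ y - a)] using
      ENNReal.toReal_mono hfin (measure_mono hsub)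
  rw [div_lt_iff₀ (by linarith)] at hy
  linarith

theorem eventually_exists_mem_Ioo_rpow (hst : StatLimC τ ℓ) (hε : 0 < ε) {a b : ℝ}
    (ha : 0 < a) (hab : a < b) :
    ∀ᶠ x in atTop, ∃ t ∈ Ioo (x ^ a) (x ^ b), ‖τ t - ℓ‖ ≤ ε := by
  filter_upwards [(tendsto_rpow_atTop (ha.trans hab)).eventually
      (hst.eventually_exists_mem_Ioo hε),
    (tendsto_rpow_atTop (sub_pos.2 hab)).eventually (eventually_ge_atTop 2),
    eventually_ge_atTop 1] with x hx hx₂ hx₁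
  have hxa : 1 ≤ x ^ a := Real.one_le_rpow hx₁ ha.le
  refine hx _ hxa ?_
  calc 2 * x ^ a ≤ x ^ (b - a) * x ^ a := by gcongr
    _ = x ^ b := by rw [← Real.rpow_add (by linarith), sub_add_cancel]

end StatLimC

noncomputable def logMean (s : ℝ → ℂ) (t : ℝ) : ℂ :=
  (Real.log t)⁻¹ • ∫ x in (1 : ℝ)..t, s x / (x : ℂ)

theorem log_smul_logMean (s : ℝ → ℂ) {t : ℝ} (ht : 1 ≤ t) :
    Real.log t • logMean s t = ∫ x in (1 : ℝ)..t, s x / (x : ℂ) := by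
  rcases ht.eq_or_lt with rfl | ht
  · simp
  · rw [logMean, smul_smul, mul_inv_cancel₀ (Real.log_pos ht).ne', one_smul]

theorem MeasureTheory.LocallyIntegrableOn.intervalIntegrable_div_ofReal {s : ℝ → ℂ}
    (hs : LocallyIntegrableOn s (Ici 1)) {a b : ℝ} (ha : 1 ≤ a) (hb : 1 ≤ b) :
    IntervalIntegrable (fun u : ℝ => s u / (u : ℂ)) volume a b := by
  have hinv : ContinuousOn (fun u : ℝ => ((u : ℂ))⁻¹) (Ici 1) :=
    Complex.continuous_ofReal.continuousOn.inv₀ fun u hu =>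
      Complex.ofReal_ne_zero.2 (by linarith [mem_Ici.1 hu])
  have hdiv := hs.mul_continuousOn hinv isClosed_Ici.isLocallyClosed
  simp only [← div_eq_mul_inv] at hdiv
  refine (hdiv.integrableOn_compact_subset ?_ isCompact_uIcc).intervalIntegrable
  exact fun u hu => (le_min ha hb).trans hu.1

theorem integral_div_eq_log_smul_logMean_sub {s : ℝ → ℂ} (hs : LocallyIntegrableOn s (Ici 1))
    {t₁ t₂ : ℝ} (ht₁ : 1 ≤ t₁) (ht₂ : 1 ≤ t₂) :
    ∫ u in t₁..t₂, s u / (u : ℂ) =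
      Real.log t₂ • logMean s t₂ - Real.log t₁ • logMean s t₁ := by
  rw [log_smul_logMean s ht₁, log_smul_logMean s ht₂, eq_sub_iff_add_eq',
    integral_add_adjacent_intervals (hs.intervalIntegrable_div_ofReal le_rfl ht₁)
      (hs.intervalIntegrable_div_ofReal ht₁ ht₂)]

theorem norm_integral_div_sub_log_smul_le {s : ℝ → ℂ} {c : ℂ} {η t₁ t₂ : ℝ} (ht₁ : 0 < t₁)
    (ht₁₂ : t₁ ≤ t₂) (hint : IntervalIntegrable (fun u : ℝ => s u / (u : ℂ)) volume t₁ t₂)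
    (hbound : ∀ u ∈ Ioc t₁ t₂, ‖s u - c‖ ≤ η) :
    ‖(∫ u in t₁..t₂, s u / (u : ℂ)) - (Real.log t₂ - Real.log t₁) • c‖ ≤
      η * (Real.log t₂ - Real.log t₁) := by
  have hinv : ∫ u in t₁..t₂, u⁻¹ = Real.log t₂ - Real.log t₁ := by
    rw [integral_inv_of_pos ht₁ (ht₁.trans_le ht₁₂), Real.log_div (ht₁.trans_le ht₁₂).ne' ht₁.ne']
  have hcont : ContinuousOn (fun u : ℝ => u⁻¹) (uIcc t₁ t₂) :=
    continuousOn_inv₀.mono fun u hu =>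
      (ht₁.trans_le (uIcc_of_le ht₁₂ ▸ hu).1).ne'
  have hint' : IntervalIntegrable (fun u : ℝ => u⁻¹ • c) volume t₁ t₂ :=
    (hcont.smul continuousOn_const).intervalIntegrable
  rw [← hinv, ← intervalIntegral.integral_smul_const, ← integral_sub hint hint',
    ← intervalIntegral.integral_const_mul]
  refine norm_integral_le_of_norm_le ht₁₂ (Eventually.of_forall fun u hu => ?_)
    (hcont.intervalIntegrable.const_mul η)
  have hu₀ : 0 < u := ht₁.trans hu.1
  have heq : s u / (u : ℂ) - u⁻¹ • c = (s u - c) * ((u : ℂ))⁻¹ := by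
    rw [Complex.real_smul, Complex.ofReal_inv]; ring
  rw [heq, norm_mul, norm_inv, Complex.norm_real, Real.norm_of_nonneg hu₀.le]
  exact mul_le_mul_of_nonneg_right (hbound u hu) (inv_nonneg.2 hu₀.le)

/-- Both `c` and `ℓ` approximate `(log t₂ - log t₁)⁻¹ ∫_{t₁}^{t₂} s(u)/u du`. -/
theorem log_sub_mul_norm_sub_le {s : ℝ → ℂ} (hs : LocallyIntegrableOn s (Ici 1)) {c ℓ : ℂ}
    {η t₁ t₂ : ℝ} (ht₁ : 1 ≤ t₁) (ht₁₂ : t₁ ≤ t₂) (hbound : ∀ u ∈ Ioc t₁ t₂, ‖s u - c‖ ≤ η) :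
    (Real.log t₂ - Real.log t₁) * ‖c - ℓ‖ ≤ η * (Real.log t₂ - Real.log t₁) +
      Real.log t₂ * ‖logMean s t₂ - ℓ‖ + Real.log t₁ * ‖logMean s t₁ - ℓ‖ := by
  have hL₁ : 0 ≤ Real.log t₁ := Real.log_nonneg ht₁
  have hL₂ : 0 ≤ Real.log t₂ := Real.log_nonneg (ht₁.trans ht₁₂)
  have hc := norm_integral_div_sub_log_smul_le (by linarith) ht₁₂
    (hs.intervalIntegrable_div_ofReal ht₁ (ht₁.trans ht₁₂)) hbound
  have hℓ : (∫ u in t₁..t₂, s u / (u : ℂ)) - (Real.log t₂ - Real.log t₁) • ℓ =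
      Real.log t₂ • (logMean s t₂ - ℓ) - Real.log t₁ • (logMean s t₁ - ℓ) := by
    rw [integral_div_eq_log_smul_logMean_sub hs ht₁ (ht₁.trans ht₁₂)]
    simp only [smul_sub, sub_smul]; abel
  set I := ∫ u in t₁..t₂, s u / (u : ℂ)
  have hsplit : (Real.log t₂ - Real.log t₁) • (c - ℓ) =
      (I - (Real.log t₂ - Real.log t₁) • ℓ) - (I - (Real.log t₂ - Real.log t₁) • c) := by
    rw [smul_sub]; abel
  have hpos : 0 ≤ Real.log t₂ - Real.log t₁ :=
    sub_nonneg.2 (Real.log_le_log (by linarith) ht₁₂)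
  calc (Real.log t₂ - Real.log t₁) * ‖c - ℓ‖
      = ‖(Real.log t₂ - Real.log t₁) • (c - ℓ)‖ := by
        rw [norm_smul, Real.norm_of_nonneg hpos]
    _ ≤ ‖Real.log t₂ • (logMean s t₂ - ℓ)‖ + ‖Real.log t₁ • (logMean s t₁ - ℓ)‖ +
        ‖I - (Real.log t₂ - Real.log t₁) • c‖ := by
        rw [hsplit, hℓ]
        exact (norm_sub_le _ _).trans (add_le_add_left (norm_sub_le _ _) _)
    _ ≤ _ := by
        rw [norm_smul, norm_smul, Real.norm_of_nonneg hL₁, Real.norm_of_nonneg hL₂]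
        linarith

theorem norm_sub_le_two_mul_of_oscillation {s : ℝ → ℂ} {δ l t₁ x t₂ : ℝ}
    (hosc₁ : ∀ t ∈ Ioc t₁ (t₁ ^ l), ‖s t - s t₁‖ ≤ δ)
    (hosc : ∀ t ∈ Ioc x (x ^ l), ‖s t - s x‖ ≤ δ) (hδ : 0 ≤ δ) (hx : x ≤ t₁ ^ l)
    (ht₂ : t₂ ≤ x ^ l) : ∀ u ∈ Ioc t₁ t₂, ‖s u - s x‖ ≤ 2 * δ := by
  intro u hu
  rcases le_or_gt u x with hux | hxu
  · have hu₁ := hosc₁ u ⟨hu.1, hux.trans hx⟩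
    have hx₁ := hosc₁ x ⟨hu.1.trans_le hux, hx⟩
    calc ‖s u - s x‖ = ‖(s u - s t₁) - (s x - s t₁)‖ := by rw [sub_sub_sub_cancel_right]
      _ ≤ 2 * δ := (norm_sub_le _ _).trans (by linarith)
  · linarith [hosc u ⟨hxu, hu.2.trans ht₂⟩]

theorem SlowlyOscillatingL1.eventually_norm_sub_le {s : ℝ → ℂ} {ℓ : ℂ}
    (hs : LocallyIntegrableOn s (Ici 1)) (hso : SlowlyOscillatingL1 s)
    (hst : StatLimC (logMean s) ℓ) {δ : ℝ} (hδ : 0 < δ) :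
    ∀ᶠ x in atTop, ‖s x - ℓ‖ ≤ 3 * δ := by
  obtain ⟨l, hl, hosc⟩ := hso.exists_eventually_norm_sub_le hδ
  obtain ⟨X₀, hX₀⟩ := eventually_atTop.1 hosc
  obtain ⟨μ, hμ, hμl⟩ := exists_between hl
  set ε' := δ * (μ - 1) / (l + 1)
  have hε' : 0 < ε' := div_pos (mul_pos hδ (by linarith)) (by linarith)
  have hε'l : ε' * (l + 1) = δ * (μ - 1) := div_mul_cancel₀ _ (by linarith)
  have hl' : 0 < l⁻¹ := inv_pos.2 (by linarith)
  filter_upwards [hst.eventually_exists_mem_Ioo_rpow hε' hl' (inv_lt_one_of_one_lt₀ hl),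
    hst.eventually_exists_mem_Ioo_rpow hε' (by linarith : 0 < μ) (by linarith : μ < l),
    (tendsto_rpow_atTop hl').eventually (eventually_ge_atTop X₀), eventually_gt_atTop 1]
    with x ⟨t₁, ht₁, hτ₁⟩ ⟨t₂, ht₂, hτ₂⟩ hX hx
  rw [Real.rpow_one] at ht₁
  have hx₀ : 0 < x := by linarith
  have ht₁₀ : 1 < t₁ := (Real.one_lt_rpow hx hl').trans ht₁.1
  have ht₁₂ : t₁ < t₂ := ht₁.2.trans ((Real.self_lt_rpow_of_one_lt hx hμ).trans ht₂.1)
  have hL₁ : 0 < Real.log t₁ := Real.log_pos ht₁₀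
  have hL₁' : Real.log t₁ < Real.log x := Real.log_lt_log (by linarith) ht₁.2
  have hL₂ : μ * Real.log x < Real.log t₂ := by
    simpa [Real.log_rpow hx₀] using Real.log_lt_log (by positivity) ht₂.1
  have hL₂' : Real.log t₂ < l * Real.log x := by
    simpa [Real.log_rpow hx₀] using Real.log_lt_log (by linarith) ht₂.2
  have hμL : Real.log x < μ * Real.log x := lt_mul_of_one_lt_left (Real.log_pos hx) hμ
  have hxt₁ : x ≤ t₁ ^ l := by
    simpa [Real.rpow_inv_rpow hx₀.le (by linarith : l ≠ 0)] using
      Real.rpow_le_rpow (by positivity) ht₁.1.le (by linarith : 0 ≤ l)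
  have hbound := norm_sub_le_two_mul_of_oscillation (hX₀ t₁ (by linarith [ht₁.1]))
    (hX₀ x (by linarith [ht₁.1, ht₁.2])) hδ.le hxt₁ ht₂.2.le
  have key := log_sub_mul_norm_sub_le hs (ℓ := ℓ) ht₁₀.le ht₁₂.le hbound
  have herr : Real.log t₂ * ‖logMean s t₂ - ℓ‖ + Real.log t₁ * ‖logMean s t₁ - ℓ‖ ≤
      δ * (Real.log t₂ - Real.log t₁) := by
    have h₁ := mul_le_mul_of_nonneg_left hτ₁ hL₁.le
    have h₂ := mul_le_mul_of_nonneg_left hτ₂ (by linarith : 0 ≤ Real.log t₂)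
    calc _ ≤ ε' * (Real.log t₂ + Real.log t₁) := by linarith
      _ ≤ ε' * ((l + 1) * Real.log x) := by gcongr; linarith
      _ = δ * ((μ - 1) * Real.log x) := by rw [← mul_assoc, hε'l, mul_assoc]
      _ ≤ δ * (Real.log t₂ - Real.log t₁) := by gcongr; linarith
  refine le_of_mul_le_mul_left ?_ (by linarith : 0 < Real.log t₂ - Real.log t₁)
  linarith

theorem stmt18 (s : ℝ → ℂ) (ℓ : ℂ)
    (hs : LocallyIntegrableOn s (Ici (1 : ℝ)))
    (hso : SlowlyOscillatingL1 s)
    (hst : StatLimC (fun t : ℝ => (Real.log t)⁻¹ • ∫ x in (1 : ℝ)..t, s x / (x : ℂ)) ℓ) :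
    Tendsto s atTop (nhds ℓ) := by
  rw [Metric.tendsto_nhds]
  intro ε hε
  filter_upwards [hso.eventually_norm_sub_le hs hst (δ := ε / 4) (by positivity)] with x hx
  rw [dist_eq_norm]
  linarith
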